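/- arXiv:1607.01861 — 7 statements merged into one kernel-verified Lean document; each statement's English description precedes it below -/
import Mathlib

section
/- (Zoutendijk-type global convergence estimate.) Suppose f is bounded below on ℂ^N and the Fréchet derivative map z ↦ Df(z) is Lipschitz continuous with constant L' > 0 (in the operator norm). Let (z_k)_{k≥0} be generated by z_{k+1} = z_k + α_k d_k, where for every k the direction d_k ≠ 0 satisfies Df(z_k)(d_k) < 0 and α_k > 0 satisfies the Wolfe conditions f(z_{k+1}) ≤ f(z_k) + c₁ α_k Df(z_k)(d_k) and Df(z_{k+1})(d_k) ≥ c₂ Df(z_k)(d_k) with fixed 0 < c₁ < c₂ < 1. Then the series Σ_{k=0}^∞ (Df(z_k)(d_k))² / ‖d_k‖² converges (is finite). -/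
/-- Zoutendijk-type estimate: under the Wolfe conditions with
descent directions, the series `Σ_k (Df(z_k)(d_k))² / ‖d_k‖²` is finite. -/
theorem zoutendijk_summable {N : ℕ} (f : EuclideanSpace ℂ (Fin N) → ℝ)
    (hf : Differentiable ℝ f)
    (hbdd : BddBelow (Set.range f))
    (L' : ℝ) (hL' : 0 < L')
    (hLip : ∀ x y : EuclideanSpace ℂ (Fin N),
      ‖fderiv ℝ f x - fderiv ℝ f y‖ ≤ L' * ‖x - y‖)
    (c₁ c₂ : ℝ) (hc₁0 : 0 < c₁) (hc₁₂ : c₁ < c₂) (hc₂1 : c₂ < 1)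
    (z d : ℕ → EuclideanSpace ℂ (Fin N)) (α : ℕ → ℝ)
    (hiter : ∀ k, z (k + 1) = z k + α k • d k)
    (hdne : ∀ k, d k ≠ 0)
    (hdesc : ∀ k, fderiv ℝ f (z k) (d k) < 0)
    (hα : ∀ k, 0 < α k)
    (hdec : ∀ k, f (z (k + 1)) ≤ f (z k) + c₁ * α k * fderiv ℝ f (z k) (d k))
    (hcurv : ∀ k, c₂ * fderiv ℝ f (z k) (d k) ≤ fderiv ℝ f (z (k + 1)) (d k)) :
    Summable (fun k : ℕ => (fderiv ℝ f (z k) (d k)) ^ 2 / ‖d k‖ ^ 2) := by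
  set g : ℕ → ℝ := fun k => fderiv ℝ f (z k) (d k) with hg
  set t : ℕ → ℝ := fun k => g k ^ 2 / ‖d k‖ ^ 2 with ht
  set C : ℝ := c₁ * (1 - c₂) / L' with hCdef
  have hc2 : (0:ℝ) < 1 - c₂ := by linarith
  have hCpos : 0 < C := by positivity
  have hdpos : ∀ k, (0:ℝ) < ‖d k‖ := fun k => norm_pos_iff.mpr (hdne k)
  have htnn : ∀ k, 0 ≤ t k := fun k => by
    have := hdpos k; positivity
  -- key step inequality
  have key : ∀ k, C * t k ≤ f (z k) - f (z (k + 1)) := by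
    intro k
    have hd2 : (0:ℝ) < ‖d k‖ ^ 2 := by have := hdpos k; positivity
    have hstep : (c₂ - 1) * g k ≤ L' * α k * ‖d k‖ ^ 2 := by
      have h1 : (c₂ - 1) * g k ≤ fderiv ℝ f (z (k + 1)) (d k) - g k := by
        have := hcurv k; simp only [hg] at *; linarith
      have h2 : fderiv ℝ f (z (k + 1)) (d k) - g k
          = (fderiv ℝ f (z (k + 1)) - fderiv ℝ f (z k)) (d k) := by
        simp [hg]
      have h3 : (fderiv ℝ f (z (k + 1)) - fderiv ℝ f (z k)) (d k)
          ≤ ‖fderiv ℝ f (z (k + 1)) - fderiv ℝ f (z k)‖ * ‖d k‖ := by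
        calc (fderiv ℝ f (z (k + 1)) - fderiv ℝ f (z k)) (d k)
            ≤ ‖(fderiv ℝ f (z (k + 1)) - fderiv ℝ f (z k)) (d k)‖ := le_abs_self _
          _ ≤ _ := ContinuousLinearMap.le_opNorm _ _
      have h4 : ‖fderiv ℝ f (z (k + 1)) - fderiv ℝ f (z k)‖ ≤ L' * (α k * ‖d k‖) := by
        have h5 := hLip (z (k + 1)) (z k)
        have h6 : ‖z (k + 1) - z k‖ = α k * ‖d k‖ := by
          rw [hiter k]
          simp [norm_smul, abs_of_pos (hα k)]
        rw [h6] at h5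
        linarith [h5]
      nlinarith [h3, h4, hdpos k]
    have hd := hdec k
    have hgneg : g k < 0 := hdesc k
    -- C * t k ≤ - (c₁ * α k * g k)
    have hCt : C * t k ≤ -(c₁ * α k * g k) := by
      have : C * t k = c₁ * (1 - c₂) * g k ^ 2 / (L' * ‖d k‖ ^ 2) := by
        simp only [hCdef, ht]; rw [div_mul_div_comm]
      rw [this, div_le_iff₀ (by positivity)]
      nlinarith [mul_le_mul_of_nonneg_left hstep (by nlinarith : (0:ℝ) ≤ c₁ * (-g k))]
    change f (z (k + 1)) ≤ f (z k) + c₁ * α k * g k at hd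
    linarith
  obtain ⟨B, hB⟩ := hbdd
  have hBle : ∀ x, B ≤ f x := fun x => hB ⟨x, rfl⟩
  have hsum : ∀ n, ∑ i ∈ Finset.range n, C * t i ≤ f (z 0) - B := by
    intro n
    have htel : ∑ i ∈ Finset.range n, (f (z i) - f (z (i + 1))) = f (z 0) - f (z n) :=
      Finset.sum_range_sub' (fun i => f (z i)) n
    calc ∑ i ∈ Finset.range n, C * t i
        ≤ ∑ i ∈ Finset.range n, (f (z i) - f (z (i + 1))) :=
          Finset.sum_le_sum (fun i _ => key i)
      _ = f (z 0) - f (z n) := htel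
      _ ≤ f (z 0) - B := by linarith [hBle (z n)]
  have hS : Summable (fun k => C * t k) :=
    summable_of_sum_range_le (fun k => mul_nonneg hCpos.le (htnn k)) hsum
  have := hS.mul_left C⁻¹
  simpa [ht, hg, inv_mul_cancel_left₀ hCpos.ne'] using this
end

section
/- (Global convergence of steepest descent.) Suppose f is bounded below on ℂ^N and the Fréchet derivative map z ↦ Df(z) is Lipschitz continuous with constant L' > 0 (in the operator norm). Let (z_k)_{k≥0} be generated by z_{k+1} = z_k + α_k d_k, where d_k = −g_k with g_k ∈ ℂ^N the real gradient of f at z_k (i.e., Df(z_k)(h) = ⟨g_k, h⟩_ℝ for all h, where ⟨x, y⟩_ℝ = Re(Σᵢ x̄ᵢ yᵢ)), with g_k ≠ 0 for all k, and where α_k > 0 satisfies the Wolfe conditions f(z_{k+1}) ≤ f(z_k) + c₁ α_k Df(z_k)(d_k) and Df(z_{k+1})(d_k) ≥ c₂ Df(z_k)(d_k) with fixed 0 < c₁ < c₂ < 1. Then ‖g_k‖ → 0 as k → ∞. -/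
/-- global convergence of steepest descent with Wolfe line search:
the norms of the (real) gradients tend to zero. -/
theorem steepest_descent_gradient_tendsto_zero {N : ℕ}
    (f : EuclideanSpace ℂ (Fin N) → ℝ)
    (hf : Differentiable ℝ f)
    (hbdd : BddBelow (Set.range f))
    (L' : ℝ) (hL' : 0 < L')
    (hLip : ∀ x y : EuclideanSpace ℂ (Fin N),
      ‖fderiv ℝ f x - fderiv ℝ f y‖ ≤ L' * ‖x - y‖)
    (c₁ c₂ : ℝ) (hc₁0 : 0 < c₁) (hc₁₂ : c₁ < c₂) (hc₂1 : c₂ < 1)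
    (z d g : ℕ → EuclideanSpace ℂ (Fin N)) (α : ℕ → ℝ)
    (hg : ∀ k (h : EuclideanSpace ℂ (Fin N)),
      fderiv ℝ f (z k) h = (inner ℂ (g k) h : ℂ).re)
    (hgne : ∀ k, g k ≠ 0)
    (hdir : ∀ k, d k = -(g k))
    (hiter : ∀ k, z (k + 1) = z k + α k • d k)
    (hα : ∀ k, 0 < α k)
    (hdec : ∀ k, f (z (k + 1)) ≤ f (z k) + c₁ * α k * fderiv ℝ f (z k) (d k))
    (hcurv : ∀ k, c₂ * fderiv ℝ f (z k) (d k) ≤ fderiv ℝ f (z (k + 1)) (d k)) :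
    Filter.Tendsto (fun k : ℕ => ‖g k‖) Filter.atTop (nhds 0) := by
  have key : ∀ k, fderiv ℝ f (z k) (d k) = -(‖g k‖ ^ 2) := by
    intro k
    rw [hg k, hdir k, inner_neg_right, inner_self_eq_norm_sq_to_K]
    simp [← Complex.ofReal_pow]
  have hdnorm : ∀ k, ‖d k‖ = ‖g k‖ := fun k => by rw [hdir k, norm_neg]
  have hznorm : ∀ k, ‖z (k + 1) - z k‖ = α k * ‖g k‖ := by
    intro k
    rw [hiter k]
    simp [norm_smul, abs_of_pos (hα k), hdnorm k]
  have hstep : ∀ k, (1 - c₂) / L' ≤ α k := by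
    intro k
    have hg2 : (0:ℝ) < ‖g k‖ ^ 2 := by
      have := norm_pos_iff.mpr (hgne k)
      positivity
    have happ : ‖(fderiv ℝ f (z (k + 1)) - fderiv ℝ f (z k)) (d k)‖
        ≤ ‖fderiv ℝ f (z (k + 1)) - fderiv ℝ f (z k)‖ * ‖d k‖ :=
      ContinuousLinearMap.le_opNorm _ _
    have hlip := hLip (z (k + 1)) (z k)
    rw [hznorm k] at hlip
    have hub : fderiv ℝ f (z (k + 1)) (d k) - fderiv ℝ f (z k) (d k)
        ≤ L' * (α k * ‖g k‖) * ‖g k‖ := by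
      have h1 : fderiv ℝ f (z (k + 1)) (d k) - fderiv ℝ f (z k) (d k)
          ≤ ‖(fderiv ℝ f (z (k + 1)) - fderiv ℝ f (z k)) (d k)‖ := by
        rw [ContinuousLinearMap.sub_apply]
        exact le_trans (le_abs_self _) (le_of_eq (Real.norm_eq_abs _).symm)
      have h2 : ‖fderiv ℝ f (z (k + 1)) - fderiv ℝ f (z k)‖ * ‖d k‖
          ≤ L' * (α k * ‖g k‖) * ‖d k‖ :=
        mul_le_mul_of_nonneg_right hlip (norm_nonneg _)
      rw [hdnorm k] at h2 happ
      linarith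
    have hcv := hcurv k
    rw [key k] at hcv hub
    -- (1 - c₂) * ‖g‖² ≤ L' * α * ‖g‖² , hence (1-c₂)/L' ≤ α
    have hineq : (1 - c₂) * ‖g k‖ ^ 2 ≤ L' * α k * ‖g k‖ ^ 2 := by nlinarith
    have : (1 - c₂) ≤ L' * α k := by
      have := (mul_le_mul_iff_of_pos_right hg2).mp hineq
      linarith
    rw [div_le_iff₀ hL']
    linarith
  set C : ℝ := c₁ * ((1 - c₂) / L') with hC
  have hCpos : 0 < C := by
    have : 0 < 1 - c₂ := by linarith
    positivity
  have hdec' : ∀ k, f (z (k + 1)) ≤ f (z k) - C * ‖g k‖ ^ 2 := by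
    intro k
    have h := hdec k
    rw [key k] at h
    have hs := hstep k
    have hg2 : (0:ℝ) ≤ ‖g k‖ ^ 2 := by positivity
    nlinarith [mul_nonneg (mul_nonneg hc₁0.le (sub_nonneg.mpr hs)) hg2]
  obtain ⟨B, hB⟩ := hbdd
  have hsum : ∀ n, ∑ k ∈ Finset.range n, C * ‖g k‖ ^ 2 ≤ f (z 0) - B := by
    intro n
    have h1 : ∑ k ∈ Finset.range n, C * ‖g k‖ ^ 2 ≤ f (z 0) - f (z n) := by
      induction n with
      | zero => simp
      | succ n ih =>
        rw [Finset.sum_range_succ]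
        have := hdec' n
        linarith
    have h2 : B ≤ f (z n) := hB (Set.mem_range_self (z n))
    linarith
  have hsummable : Summable (fun k => C * ‖g k‖ ^ 2) :=
    summable_of_sum_range_le (fun k => by positivity) hsum
  have ht0 : Filter.Tendsto (fun k => C * ‖g k‖ ^ 2) Filter.atTop (nhds 0) :=
    hsummable.tendsto_atTop_zero
  have ht1 : Filter.Tendsto (fun k => ‖g k‖ ^ 2) Filter.atTop (nhds 0) := by
    have := ht0.const_mul C⁻¹
    simpa [mul_assoc, inv_mul_cancel_left₀ hCpos.ne'] using this
  have ht2 : Filter.Tendsto (fun k => Real.sqrt (‖g k‖ ^ 2)) Filter.atTop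
      (nhds (Real.sqrt 0)) := (Real.continuous_sqrt.tendsto 0).comp ht1
  simpa [Real.sqrt_sq (norm_nonneg _), Real.sqrt_zero] using ht2
end

section
/- A complex number λ is an eigenvalue of the MLP Hessian matrix H^{MLP} if and only if there is an index i with λ = 1 + (|v_i|² − ε²) I_i / (|v_i|² + ε²)² or λ = 1 − I_i / (|v_i|² + ε²). -/
/-- The MLP Hessian block matrix
`H^{MLP} = [[U* diag r U, U* diag c U*], [U diag c̄ U, U diag r U*]]`, with
`rᵢ = 1 − ε² Iᵢ/(|vᵢ|²+ε²)²` and `cᵢ = Iᵢ vᵢ²/(|vᵢ|²+ε²)²` where `v = U u`. -/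
noncomputable def mlpHessian {N : ℕ} (U : Matrix (Fin N) (Fin N) ℂ)
    (u : Fin N → ℂ) (I : Fin N → ℝ) (ε : ℝ) :
    Matrix (Fin N ⊕ Fin N) (Fin N ⊕ Fin N) ℂ :=
  let v : Fin N → ℂ := U.mulVec u
  let r : Fin N → ℝ := fun i => 1 - ε ^ 2 * I i / ((‖v i‖) ^ 2 + ε ^ 2) ^ 2
  let c : Fin N → ℂ := fun i =>
    (I i : ℂ) * (v i) ^ 2 / ((((‖v i‖) ^ 2 + ε ^ 2) ^ 2 : ℝ) : ℂ)
  Matrix.fromBlocks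
    (star U * Matrix.diagonal (fun i => (r i : ℂ)) * U)
    (star U * Matrix.diagonal c * star U)
    (U * Matrix.diagonal (fun i => star (c i)) * U)
    (U * Matrix.diagonal (fun i => (r i : ℂ)) * star U)

/-- the eigenvalues of the MLP Hessian are exactly the numbers
`1 + (|vᵢ|² − ε²) Iᵢ/(|vᵢ|²+ε²)²` and `1 − Iᵢ/(|vᵢ|²+ε²)`. -/
theorem mlpHessian_eigenvalues {N : ℕ} (hN : 0 < N)
    (U : Matrix (Fin N) (Fin N) ℂ) (hU : star U * U = 1 ∧ U * star U = 1)
    (u : Fin N → ℂ) (I : Fin N → ℝ) (hI : ∀ i, 0 ≤ I i)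
    (ε : ℝ) (hε : 0 < ε) (lam : ℂ) :
    (∃ x : Fin N ⊕ Fin N → ℂ, x ≠ 0 ∧ (mlpHessian U u I ε).mulVec x = lam • x) ↔
      ∃ i : Fin N,
        lam = ((1 + ((‖U.mulVec u i‖) ^ 2 - ε ^ 2) * I i /
            ((‖U.mulVec u i‖) ^ 2 + ε ^ 2) ^ 2 : ℝ) : ℂ) ∨
        lam = ((1 - I i / ((‖U.mulVec u i‖) ^ 2 + ε ^ 2) : ℝ) : ℂ) := by
  obtain ⟨hU1, hU2⟩ := hU
  set v : Fin N → ℂ := U.mulVec u with hv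
  set rr : Fin N → ℝ := fun i => 1 - ε ^ 2 * I i / ((‖v i‖) ^ 2 + ε ^ 2) ^ 2 with hrr
  set c : Fin N → ℂ := fun i =>
    (I i : ℂ) * (v i) ^ 2 / ((((‖v i‖) ^ 2 + ε ^ 2) ^ 2 : ℝ) : ℂ) with hc
  have hden : ∀ i, (0:ℝ) < (‖v i‖) ^ 2 + ε ^ 2 := fun i => by positivity
  have habs : ∀ i, ‖c i‖ =
      I i * (‖v i‖) ^ 2 / ((‖v i‖) ^ 2 + ε ^ 2) ^ 2 := by
    intro i
    rw [hc]
    simp only [norm_div, norm_mul, Complex.norm_real, norm_pow, Real.norm_eq_abs]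
    rw [abs_of_nonneg (hI i), abs_of_nonneg (by positivity : (0:ℝ) ≤ (‖v i‖) ^ 2 + ε ^ 2)]
  set D : Matrix (Fin N ⊕ Fin N) (Fin N ⊕ Fin N) ℂ :=
    Matrix.fromBlocks (Matrix.diagonal fun i => (rr i : ℂ)) (Matrix.diagonal c)
      (Matrix.diagonal fun i => star (c i)) (Matrix.diagonal fun i => (rr i : ℂ)) with hD
  set W : Matrix (Fin N ⊕ Fin N) (Fin N ⊕ Fin N) ℂ :=
    Matrix.fromBlocks U 0 0 (star U) with hW
  have hWstar : star W = Matrix.fromBlocks (star U) 0 0 U := by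
    rw [hW, Matrix.star_eq_conjTranspose, Matrix.fromBlocks_conjTranspose]
    simp [Matrix.star_eq_conjTranspose]
  have hWW : star W * W = 1 := by
    rw [hWstar, hW, Matrix.fromBlocks_multiply]
    simp [hU1, hU2, ← Matrix.fromBlocks_one]
  have hWW' : W * star W = 1 := by
    rw [hWstar, hW, Matrix.fromBlocks_multiply]
    simp [hU1, hU2, ← Matrix.fromBlocks_one]
  have hH : mlpHessian U u I ε = star W * D * W := by
    rw [hWstar, hW, hD, mlpHessian]
    rw [Matrix.fromBlocks_multiply, Matrix.fromBlocks_multiply]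
    simp only [Matrix.zero_mul, Matrix.mul_zero, zero_add, add_zero, Matrix.mul_assoc]
    rfl
  -- transfer to D
  have key : (∃ x : Fin N ⊕ Fin N → ℂ, x ≠ 0 ∧ (mlpHessian U u I ε).mulVec x = lam • x) ↔
      (∃ y : Fin N ⊕ Fin N → ℂ, y ≠ 0 ∧ D.mulVec y = lam • y) := by
    constructor
    · rintro ⟨x, hx0, hx⟩
      refine ⟨W.mulVec x, ?_, ?_⟩
      · intro h
        apply hx0
        have : (star W).mulVec (W.mulVec x) = 0 := by rw [h]; simp [Matrix.mulVec_zero]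
        rwa [Matrix.mulVec_mulVec, hWW, Matrix.one_mulVec] at this
      · have hDW : D * W = W * mlpHessian U u I ε := by
          rw [hH, ← Matrix.mul_assoc, ← Matrix.mul_assoc, hWW', Matrix.one_mul]
        rw [Matrix.mulVec_mulVec, hDW, ← Matrix.mulVec_mulVec, hx, Matrix.mulVec_smul]
    · rintro ⟨y, hy0, hy⟩
      refine ⟨(star W).mulVec y, ?_, ?_⟩
      · intro h
        apply hy0
        have : W.mulVec ((star W).mulVec y) = 0 := by rw [h]; simp [Matrix.mulVec_zero]
        rwa [Matrix.mulVec_mulVec, hWW', Matrix.one_mulVec] at this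
      · have hHW : mlpHessian U u I ε * star W = star W * D := by
          rw [hH, Matrix.mul_assoc, hWW', Matrix.mul_one]
        rw [Matrix.mulVec_mulVec, hHW, ← Matrix.mulVec_mulVec, hy, Matrix.mulVec_smul]
  rw [key]
  -- componentwise description of D
  have hDm : ∀ (y : Fin N ⊕ Fin N → ℂ) (i : Fin N),
      D.mulVec y (Sum.inl i) = (rr i : ℂ) * y (Sum.inl i) + c i * y (Sum.inr i) ∧
      D.mulVec y (Sum.inr i) = star (c i) * y (Sum.inl i) + (rr i : ℂ) * y (Sum.inr i) := by
    intro y i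
    rw [hD]
    constructor <;>
      simp [Matrix.fromBlocks_mulVec, Matrix.mulVec_diagonal]
  have hcc : ∀ i, c i * star (c i) = ((‖c i‖ : ℝ) : ℂ) ^ 2 := by
    intro i
    rw [← Complex.ofReal_pow, Complex.sq_norm, Complex.star_def, Complex.mul_conj]
  -- arithmetic identities
  have harith1 : ∀ i, rr i + ‖c i‖ =
      1 + ((‖v i‖) ^ 2 - ε ^ 2) * I i / ((‖v i‖) ^ 2 + ε ^ 2) ^ 2 := by
    intro i
    rw [habs, hrr]
    have := hden i
    field_simp
    ring
  have harith2 : ∀ i, rr i - ‖c i‖ =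
      1 - I i / ((‖v i‖) ^ 2 + ε ^ 2) := by
    intro i
    rw [habs, hrr]
    have := hden i
    field_simp
    ring
  constructor
  · rintro ⟨y, hy0, hy⟩
    obtain ⟨j, hj⟩ := Function.ne_iff.mp hy0
    have main : ∀ i : Fin N, (y (Sum.inl i) ≠ 0 ∨ y (Sum.inr i) ≠ 0) →
        lam = ((rr i : ℝ) : ℂ) + (‖c i‖ : ℂ) ∨
        lam = ((rr i : ℝ) : ℂ) - (‖c i‖ : ℂ) := by
      intro i hab
      set a := y (Sum.inl i) with ha
      set b := y (Sum.inr i) with hb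
      have eq1 : (rr i : ℂ) * a + c i * b = lam * a := by
        rw [← (hDm y i).1, hy]; simp [ha]
      have eq2 : star (c i) * a + (rr i : ℂ) * b = lam * b := by
        rw [← (hDm y i).2, hy]; simp [hb]
      have h2 : ((lam - rr i) ^ 2 - c i * star (c i)) * a = 0 := by
        linear_combination ((rr i : ℂ) - lam) * eq1 - c i * eq2
      have h3 : ((lam - rr i) ^ 2 - c i * star (c i)) * b = 0 := by
        linear_combination ((rr i : ℂ) - lam) * eq2 - star (c i) * eq1
      have hsq : (lam - rr i) ^ 2 = ((‖c i‖ : ℝ) : ℂ) ^ 2 := by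
        rcases hab with h | h
        · have := (mul_eq_zero.mp h2).resolve_right h
          rw [← hcc i]; linear_combination this
        · have := (mul_eq_zero.mp h3).resolve_right h
          rw [← hcc i]; linear_combination this
      have hfac : (lam - rr i - ‖c i‖) * (lam - rr i + ‖c i‖) = 0 := by
        linear_combination hsq
      rcases mul_eq_zero.mp hfac with h | h
      · left; linear_combination h
      · right; linear_combination h
    cases j with
    | inl i =>
        obtain h | h := main i (Or.inl hj) <;> refine ⟨i, ?_⟩
        · left; rw [h, ← harith1 i]; push_cast; ring
        · right; rw [h, ← harith2 i]; push_cast; ring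
    | inr i =>
        obtain h | h := main i (Or.inr hj) <;> refine ⟨i, ?_⟩
        · left; rw [h, ← harith1 i]; push_cast; ring
        · right; rw [h, ← harith2 i]; push_cast; ring
  · rintro ⟨i, hlam⟩
    have hlam' : lam = ((rr i : ℝ) : ℂ) + (‖c i‖ : ℂ) ∨
        lam = ((rr i : ℝ) : ℂ) - (‖c i‖ : ℂ) := by
      rcases hlam with h | h
      · left; rw [h, ← harith1 i]; push_cast; ring
      · right; rw [h, ← harith2 i]; push_cast; ring
    by_cases hc0 : c i = 0
    · have hm0 : (‖c i‖ : ℂ) = 0 := by simp [hc0]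
      have hlr : lam = (rr i : ℂ) := by
        rcases hlam' with h | h <;> rw [h, hm0] <;> ring
      refine ⟨Sum.elim (Pi.single i 1) 0, ?_, ?_⟩
      · intro h
        have := congrFun h (Sum.inl i)
        simp at this
      · funext j
        rcases j with j | j
        · rw [(hDm _ j).1]
          rcases eq_or_ne j i with rfl | hji
          · simp [hc0, hlr]
          · simp [Pi.single_apply, hji]
        · rw [(hDm _ j).2]
          rcases eq_or_ne j i with rfl | hji
          · simp [hc0]
          · simp [Pi.single_apply, hji]
    · rcases hlam' with h | h
      · refine ⟨Sum.elim (Pi.single i (c i)) (Pi.single i (‖c i‖ : ℂ)), ?_, ?_⟩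
        · intro hz
          have := congrFun hz (Sum.inl i)
          simp [hc0] at this
        · funext j
          rcases j with j | j
          · rw [(hDm _ j).1]
            rcases eq_or_ne j i with rfl | hji
            · simp only [Sum.elim_inl, Sum.elim_inr, Pi.single_eq_same, Pi.smul_apply,
                smul_eq_mul]
              rw [h]; ring
            · simp [Pi.single_apply, hji]
          · rw [(hDm _ j).2]
            rcases eq_or_ne j i with rfl | hji
            · simp only [Sum.elim_inl, Sum.elim_inr, Pi.single_eq_same, Pi.smul_apply,
                smul_eq_mul]
              rw [h]; linear_combination hcc j
            · simp [Pi.single_apply, hji]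
      · refine ⟨Sum.elim (Pi.single i (c i)) (Pi.single i (-(‖c i‖ : ℂ))), ?_, ?_⟩
        · intro hz
          have := congrFun hz (Sum.inl i)
          simp [hc0] at this
        · funext j
          rcases j with j | j
          · rw [(hDm _ j).1]
            rcases eq_or_ne j i with rfl | hji
            · simp only [Sum.elim_inl, Sum.elim_inr, Pi.single_eq_same, Pi.smul_apply,
                smul_eq_mul]
              rw [h]; ring
            · simp [Pi.single_apply, hji]
          · rw [(hDm _ j).2]
            rcases eq_or_ne j i with rfl | hji
            · simp only [Sum.elim_inl, Sum.elim_inr, Pi.single_eq_same, Pi.smul_apply,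
                smul_eq_mul]
              rw [h]; linear_combination hcc j
            · simp [Pi.single_apply, hji]
end

section
/- A complex number λ is an eigenvalue of the LS Hessian matrix H^{LS} if and only if there is an index i with λ = 1 − ε² M_i / (|v_i|² + ε²)^{3/2} or λ = 1 − M_i / √(|v_i|² + ε²). -/
lemma aux_eig_conj {n : Type*} [Fintype n] [DecidableEq n] (W A : Matrix n n ℂ)
    (hW1 : star W * W = 1) (hW2 : W * star W = 1) (lam : ℂ) :
    (∃ x : n → ℂ, x ≠ 0 ∧ (W * A * star W).mulVec x = lam • x) ↔
    (∃ y : n → ℂ, y ≠ 0 ∧ A.mulVec y = lam • y) := by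
  constructor
  · rintro ⟨x, hx0, hx⟩
    refine ⟨(star W).mulVec x, fun h0 => hx0 ?_, ?_⟩
    · have h : (W * star W).mulVec x = W.mulVec 0 := by rw [← Matrix.mulVec_mulVec, h0]
      rw [hW2, Matrix.one_mulVec, Matrix.mulVec_zero] at h
      exact h
    · calc A.mulVec ((star W).mulVec x) = (A * star W).mulVec x := Matrix.mulVec_mulVec _ _ _
        _ = (star W * (W * A * star W)).mulVec x := by
            rw [← Matrix.mul_assoc, ← Matrix.mul_assoc, hW1, Matrix.one_mul]
        _ = (star W).mulVec ((W * A * star W).mulVec x) := (Matrix.mulVec_mulVec _ _ _).symm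
        _ = (star W).mulVec (lam • x) := by rw [hx]
        _ = lam • (star W).mulVec x := Matrix.mulVec_smul _ _ _
  · rintro ⟨y, hy0, hy⟩
    refine ⟨W.mulVec y, fun h0 => hy0 ?_, ?_⟩
    · have h : (star W * W).mulVec y = (star W).mulVec 0 := by rw [← Matrix.mulVec_mulVec, h0]
      rw [hW1, Matrix.one_mulVec, Matrix.mulVec_zero] at h
      exact h
    · calc (W * A * star W).mulVec (W.mulVec y) = (W * A * star W * W).mulVec y :=
          Matrix.mulVec_mulVec _ _ _
        _ = (W * A).mulVec y := by rw [Matrix.mul_assoc (W * A), hW1, Matrix.mul_one]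
        _ = W.mulVec (A.mulVec y) := (Matrix.mulVec_mulVec _ _ _).symm
        _ = W.mulVec (lam • y) := by rw [hy]
        _ = lam • W.mulVec y := Matrix.mulVec_smul _ _ _

lemma aux_quad_eig (lam : ℂ) (R C X Y : ℝ) (hX : R + C = X) (hY : R - C = Y) :
    ((lam - (R : ℂ)) ^ 2 = ((C : ℝ) : ℂ) ^ 2) ↔ (lam = ((X : ℝ) : ℂ) ∨ lam = ((Y : ℝ) : ℂ)) := by
  constructor
  · intro h
    have h0 : (lam - (R : ℂ) - (C : ℂ)) * (lam - (R : ℂ) + (C : ℂ)) = 0 := by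
      linear_combination h
    rcases mul_eq_zero.mp h0 with h' | h'
    · left; rw [← hX]; push_cast; linear_combination h'
    · right; rw [← hY]; push_cast; linear_combination h'
  · rintro (rfl | rfl)
    · rw [← hX]; push_cast; ring
    · rw [← hY]; push_cast; ring

lemma aux_block_iff {N : ℕ} (r c : Fin N → ℂ) (lam : ℂ) (y : Fin N ⊕ Fin N → ℂ) :
    (Matrix.fromBlocks (Matrix.diagonal r) (Matrix.diagonal c)
        (Matrix.diagonal (fun i => star (c i))) (Matrix.diagonal r)).mulVec y = lam • y ↔
    ∀ i : Fin N, (r i * y (Sum.inl i) + c i * y (Sum.inr i) = lam * y (Sum.inl i)) ∧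
      (star (c i) * y (Sum.inl i) + r i * y (Sum.inr i) = lam * y (Sum.inr i)) := by
  have hy : y = Sum.elim (y ∘ Sum.inl) (y ∘ Sum.inr) := (Sum.elim_comp_inl_inr y).symm
  constructor
  · intro h i
    have h1 := congrFun h (Sum.inl i)
    have h2 := congrFun h (Sum.inr i)
    rw [hy, Matrix.fromBlocks_mulVec] at h1 h2
    simp only [Sum.elim_inl, Sum.elim_inr, Pi.add_apply, Pi.smul_apply, smul_eq_mul,
      Matrix.mulVec_diagonal, Function.comp_apply] at h1 h2
    exact ⟨h1, h2⟩
  · intro h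
    funext j
    conv_lhs => rw [hy, Matrix.fromBlocks_mulVec]
    cases j with
    | inl i =>
      simp only [Sum.elim_inl, Pi.add_apply, Pi.smul_apply, smul_eq_mul,
        Matrix.mulVec_diagonal, Function.comp_apply]
      exact (h i).1
    | inr i =>
      simp only [Sum.elim_inr, Pi.add_apply, Pi.smul_apply, smul_eq_mul,
        Matrix.mulVec_diagonal, Function.comp_apply]
      exact (h i).2

lemma aux_block {N : ℕ} (r c : Fin N → ℂ) (lam : ℂ) :
    (∃ y : Fin N ⊕ Fin N → ℂ, y ≠ 0 ∧
      (Matrix.fromBlocks (Matrix.diagonal r) (Matrix.diagonal c)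
        (Matrix.diagonal (fun i => star (c i))) (Matrix.diagonal r)).mulVec y = lam • y) ↔
    ∃ i, (lam - r i) ^ 2 = c i * star (c i) := by
  constructor
  · rintro ⟨y, hy0, hy⟩
    rw [aux_block_iff] at hy
    obtain ⟨j, hj⟩ := Function.ne_iff.mp hy0
    simp only [Pi.zero_apply] at hj
    cases j with
    | inl i =>
      obtain ⟨h1, h2⟩ := hy i
      refine ⟨i, ?_⟩
      have key : ((lam - r i) ^ 2 - c i * star (c i)) * y (Sum.inl i) = 0 := by
        linear_combination (-(lam - r i)) * h1 - c i * h2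
      rcases mul_eq_zero.mp key with h | h
      · exact sub_eq_zero.mp h
      · exact absurd h hj
    | inr i =>
      obtain ⟨h1, h2⟩ := hy i
      refine ⟨i, ?_⟩
      have key : ((lam - r i) ^ 2 - c i * star (c i)) * y (Sum.inr i) = 0 := by
        linear_combination (-(star (c i))) * h1 - (lam - r i) * h2
      rcases mul_eq_zero.mp key with h | h
      · exact sub_eq_zero.mp h
      · exact absurd h hj
  · rintro ⟨i, hi⟩
    by_cases hc : c i = 0
    · have hlam : lam = r i := by
        have h0 : (lam - r i) ^ 2 = 0 := by rw [hi, hc]; ring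
        have := pow_eq_zero_iff (n := 2) (by norm_num) |>.mp h0
        exact sub_eq_zero.mp this
      refine ⟨Sum.elim (fun j => if j = i then 1 else 0) 0, ?_, ?_⟩
      · intro h
        have := congrFun h (Sum.inl i)
        simp at this
      · rw [aux_block_iff]
        intro j
        rcases eq_or_ne j i with rfl | hji
        · simp [hc, hlam]
        · simp [hji]
    · refine ⟨Sum.elim (fun j => if j = i then c i else 0)
        (fun j => if j = i then lam - r i else 0), ?_, ?_⟩
      · intro h
        have := congrFun h (Sum.inl i)
        simp [hc] at this
      · rw [aux_block_iff]
        intro j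
        rcases eq_or_ne j i with rfl | hji
        · simp only [Sum.elim_inl, Sum.elim_inr, if_pos rfl, if_true, eq_self_iff_true]
          constructor
          · ring
          · linear_combination -hi
        · simp [hji]


/-- The LS Hessian block matrix
`H^{LS} = [[U* diag r U, U* diag c U*], [U diag c̄ U, U diag r U*]]`, with
`rᵢ = 1 − (Mᵢ/(2√(|vᵢ|²+ε²)))·((|vᵢ|²+2ε²)/(|vᵢ|²+ε²))` and
`cᵢ = Mᵢ vᵢ²/(2(|vᵢ|²+ε²)^{3/2})` where `v = U u`. -/
noncomputable def lsHessian {N : ℕ} (U : Matrix (Fin N) (Fin N) ℂ)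
    (u : Fin N → ℂ) (M : Fin N → ℝ) (ε : ℝ) :
    Matrix (Fin N ⊕ Fin N) (Fin N ⊕ Fin N) ℂ :=
  let v : Fin N → ℂ := U.mulVec u
  let r : Fin N → ℝ := fun i =>
    1 - (M i / (2 * Real.sqrt ((‖v i‖) ^ 2 + ε ^ 2))) *
      (((‖v i‖) ^ 2 + 2 * ε ^ 2) / ((‖v i‖) ^ 2 + ε ^ 2))
  let c : Fin N → ℂ := fun i =>
    (M i : ℂ) * (v i) ^ 2 /
      ((2 * ((‖v i‖) ^ 2 + ε ^ 2) ^ ((3 : ℝ) / 2) : ℝ) : ℂ)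
  Matrix.fromBlocks
    (star U * Matrix.diagonal (fun i => (r i : ℂ)) * U)
    (star U * Matrix.diagonal c * star U)
    (U * Matrix.diagonal (fun i => star (c i)) * U)
    (U * Matrix.diagonal (fun i => (r i : ℂ)) * star U)

/-- the eigenvalues of the LS Hessian are exactly the numbers
`1 − ε² Mᵢ/(|vᵢ|²+ε²)^{3/2}` and `1 − Mᵢ/√(|vᵢ|²+ε²)`. -/
theorem lsHessian_eigenvalues {N : ℕ} (hN : 0 < N)
    (U : Matrix (Fin N) (Fin N) ℂ) (hU : star U * U = 1 ∧ U * star U = 1)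
    (u : Fin N → ℂ) (M : Fin N → ℝ) (hM : ∀ i, 0 ≤ M i)
    (ε : ℝ) (hε : 0 < ε) (lam : ℂ) :
    (∃ x : Fin N ⊕ Fin N → ℂ, x ≠ 0 ∧ (lsHessian U u M ε).mulVec x = lam • x) ↔
      ∃ i : Fin N,
        lam = ((1 - ε ^ 2 * M i /
            ((‖U.mulVec u i‖) ^ 2 + ε ^ 2) ^ ((3 : ℝ) / 2) : ℝ) : ℂ) ∨
        lam = ((1 - M i / Real.sqrt ((‖U.mulVec u i‖) ^ 2 + ε ^ 2) : ℝ) : ℂ) := by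
    classical
  obtain ⟨hU1, hU2⟩ := hU
  set r : Fin N → ℝ := fun i =>
    1 - (M i / (2 * Real.sqrt ((‖U.mulVec u i‖) ^ 2 + ε ^ 2))) *
      (((‖U.mulVec u i‖) ^ 2 + 2 * ε ^ 2) /
        ((‖U.mulVec u i‖) ^ 2 + ε ^ 2)) with hr
  set c : Fin N → ℂ := fun i =>
    (M i : ℂ) * (U.mulVec u i) ^ 2 /
      ((2 * ((‖U.mulVec u i‖) ^ 2 + ε ^ 2) ^ ((3 : ℝ) / 2) : ℝ) : ℂ) with hc
  set W : Matrix (Fin N ⊕ Fin N) (Fin N ⊕ Fin N) ℂ :=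
    Matrix.fromBlocks (star U) 0 0 U with hW
  set K : Matrix (Fin N ⊕ Fin N) (Fin N ⊕ Fin N) ℂ :=
    Matrix.fromBlocks (Matrix.diagonal (fun i => ((r i : ℝ) : ℂ))) (Matrix.diagonal c)
      (Matrix.diagonal (fun i => star (c i)))
      (Matrix.diagonal (fun i => ((r i : ℝ) : ℂ))) with hK
  have hsW : star W = Matrix.fromBlocks U 0 0 (star U) := by
    rw [hW, Matrix.star_eq_conjTranspose, Matrix.fromBlocks_conjTranspose]
    simp [Matrix.star_eq_conjTranspose]
  have hWW1 : star W * W = 1 := by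
    rw [hsW, hW, Matrix.fromBlocks_multiply]
    simp [hU1, hU2, Matrix.fromBlocks_one]
  have hWW2 : W * star W = 1 := by
    rw [hsW, hW, Matrix.fromBlocks_multiply]
    simp [hU1, hU2, Matrix.fromBlocks_one]
  have hH : lsHessian U u M ε = W * K * star W := by
    rw [hsW, hW, hK, Matrix.fromBlocks_multiply, Matrix.fromBlocks_multiply]
    simp only [lsHessian, hr, hc, Matrix.mul_zero, Matrix.zero_mul, add_zero, zero_add,
      Matrix.mul_assoc]
  have key : ∀ i : Fin N, ((lam - ((r i : ℝ) : ℂ)) ^ 2 = c i * star (c i)) ↔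
      (lam = ((1 - ε ^ 2 * M i /
          ((‖U.mulVec u i‖) ^ 2 + ε ^ 2) ^ ((3 : ℝ) / 2) : ℝ) : ℂ) ∨
       lam = ((1 - M i / Real.sqrt ((‖U.mulVec u i‖) ^ 2 + ε ^ 2) : ℝ) : ℂ)) := by
    intro i
    simp only [hr, hc]
    set A := ‖U.mulVec u i‖ ^ 2 with hAdef
    have hA0 : 0 ≤ A := sq_nonneg _
    have hst : 0 < A + ε ^ 2 := by positivity
    set t := Real.sqrt (A + ε ^ 2) with htdef
    have ht : 0 < t := Real.sqrt_pos.mpr hst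
    have ht2 : t ^ 2 = A + ε ^ 2 := Real.sq_sqrt hst.le
    have h32 : (A + ε ^ 2) ^ ((3 : ℝ) / 2) = (A + ε ^ 2) * t := by
      rw [htdef, show ((3 : ℝ) / 2) = 1 + 1 / 2 by norm_num, Real.rpow_add hst, Real.rpow_one,
        Real.sqrt_eq_rpow]
    have habs : ‖(M i : ℂ) * (U.mulVec u i) ^ 2 /
        ((2 * (A + ε ^ 2) ^ ((3 : ℝ) / 2) : ℝ) : ℂ)‖ = M i * A / (2 * ((A + ε ^ 2) * t)) := by
      rw [norm_div, norm_mul, norm_pow, Complex.norm_real, Complex.norm_real, Real.norm_eq_abs,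
        Real.norm_eq_abs, abs_of_nonneg (hM i), abs_of_nonneg (by positivity), h32, ← hAdef]
    have hcc : ((M i : ℂ) * (U.mulVec u i) ^ 2 / ((2 * (A + ε ^ 2) ^ ((3 : ℝ) / 2) : ℝ) : ℂ)) *
        star ((M i : ℂ) * (U.mulVec u i) ^ 2 / ((2 * (A + ε ^ 2) ^ ((3 : ℝ) / 2) : ℝ) : ℂ)) =
        ((M i * A / (2 * ((A + ε ^ 2) * t)) : ℝ) : ℂ) ^ 2 := by
      rw [Complex.star_def, Complex.mul_conj, ← Complex.sq_norm, habs]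
      push_cast
      ring
    rw [hcc]
    have hA' : A = t ^ 2 - ε ^ 2 := by linarith
    have e1 : (1 - M i / (2 * t) * ((A + 2 * ε ^ 2) / (A + ε ^ 2))) +
        M i * A / (2 * ((A + ε ^ 2) * t)) =
        1 - ε ^ 2 * M i / ((A + ε ^ 2) ^ ((3 : ℝ) / 2)) := by
      rw [h32, hA', show t ^ 2 - ε ^ 2 + ε ^ 2 = t ^ 2 from by ring]
      field_simp
      ring
    have e2 : (1 - M i / (2 * t) * ((A + 2 * ε ^ 2) / (A + ε ^ 2))) -
        M i * A / (2 * ((A + ε ^ 2) * t)) = 1 - M i / t := by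
      rw [hA', show t ^ 2 - ε ^ 2 + ε ^ 2 = t ^ 2 from by ring]
      field_simp
      ring
    exact aux_quad_eig lam _ _ _ _ e1 e2
  rw [hH, aux_eig_conj W K hWW1 hWW2 lam, hK,
    aux_block (fun i => ((r i : ℝ) : ℂ)) c lam]
  exact exists_congr key
end

section
/- If M_i ≤ |v_i| for every index i, then the LS Hessian matrix H^{LS} is positive semidefinite. -/
open scoped ComplexOrder

/-- Scalar 2×2 quadratic-form nonnegativity: if `|c| ≤ r` then the Hermitian
form of `!![r, c; c̄, r]` is nonnegative. -/
lemma ls_quad_nonneg (r : ℝ) (c a b : ℂ) (hc : ‖c‖ ≤ r) :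
    0 ≤ (starRingEnd ℂ) a * ((r : ℂ) * a + c * b) +
        (starRingEnd ℂ) b * ((starRingEnd ℂ) c * a + (r : ℂ) * b) := by
  set z : ℂ := (starRingEnd ℂ) a * c * b with hz
  have h1 : (starRingEnd ℂ) a * ((r : ℂ) * a + c * b) +
      (starRingEnd ℂ) b * ((starRingEnd ℂ) c * a + (r : ℂ) * b)
      = (r : ℂ) * Complex.normSq a + (r : ℂ) * Complex.normSq b + (z + (starRingEnd ℂ) z) := by
    simp only [hz, map_mul, Complex.conj_conj, Complex.normSq_eq_conj_mul_self]
    ring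
  rw [h1, Complex.add_conj]
  have h2 : (r : ℂ) * (Complex.normSq a : ℂ) + (r : ℂ) * (Complex.normSq b : ℂ) + (2 * z.re : ℝ)
      = ((r * Complex.normSq a + r * Complex.normSq b + 2 * z.re : ℝ) : ℂ) := by
    push_cast; ring
  rw [h2, Complex.zero_le_real]
  have habs : ‖z‖ = ‖a‖ * ‖c‖ * ‖b‖ := by
    simp [hz, map_mul]
  have hre : -(‖a‖ * ‖c‖ * ‖b‖) ≤ z.re := by
    rw [← habs]
    calc -(‖z‖) ≤ -|z.re| := neg_le_neg (Complex.abs_re_le_norm z)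
      _ ≤ z.re := neg_abs_le _
  have hna := norm_nonneg a
  have hnb := norm_nonneg b
  have hnc := norm_nonneg c
  have hsqa : (Complex.normSq a : ℝ) = ‖a‖ ^ 2 := (Complex.sq_norm a).symm
  have hsqb : (Complex.normSq b : ℝ) = ‖b‖ ^ 2 := (Complex.sq_norm b).symm
  nlinarith [sq_nonneg (‖a‖ - ‖b‖), mul_nonneg hna hnb,
    mul_le_mul_of_nonneg_right hc (mul_nonneg hna hnb)]

/-- Positive semidefiniteness of the conjugated block matrix, given the
dominance `|cᵢ| ≤ rᵢ`. -/
lemma ls_blocks_posSemidef {N : ℕ} (U : Matrix (Fin N) (Fin N) ℂ)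
    (r : Fin N → ℝ) (c : Fin N → ℂ) (hrc : ∀ i, ‖c i‖ ≤ r i) :
    (Matrix.fromBlocks
      (star U * Matrix.diagonal (fun i => (r i : ℂ)) * U)
      (star U * Matrix.diagonal c * star U)
      (U * Matrix.diagonal (fun i => star (c i)) * U)
      (U * Matrix.diagonal (fun i => (r i : ℂ)) * star U)).PosSemidef := by
  set K : Matrix (Fin N ⊕ Fin N) (Fin N ⊕ Fin N) ℂ :=
    Matrix.fromBlocks (Matrix.diagonal (fun i => (r i : ℂ))) (Matrix.diagonal c)
      (Matrix.diagonal (fun i => star (c i))) (Matrix.diagonal (fun i => (r i : ℂ))) with hK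
  set W : Matrix (Fin N ⊕ Fin N) (Fin N ⊕ Fin N) ℂ :=
    Matrix.fromBlocks U 0 0 (star U) with hW
  have hKps : K.PosSemidef := by
    refine Matrix.posSemidef_iff_dotProduct_mulVec.mpr ⟨?_, ?_⟩
    · show K.conjTranspose = K
      rw [hK, Matrix.fromBlocks_conjTranspose]
      simp [Matrix.diagonal_conjTranspose]
    · intro x
      have hx : x = Sum.elim (fun i => x (Sum.inl i)) (fun i => x (Sum.inr i)) := by
        ext (i | i) <;> rfl
      rw [hK]
      rw [hx, Matrix.fromBlocks_mulVec]
      simp only [Sum.elim_comp_inl, Sum.elim_comp_inr]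
      have hquad : dotProduct
          (star (Sum.elim (fun i => x (Sum.inl i)) (fun i => x (Sum.inr i))))
          (Sum.elim
            ((Matrix.diagonal (fun i => (r i : ℂ))).mulVec (fun i => x (Sum.inl i)) +
              (Matrix.diagonal c).mulVec (fun i => x (Sum.inr i)))
            ((Matrix.diagonal (fun i => star (c i))).mulVec (fun i => x (Sum.inl i)) +
              (Matrix.diagonal (fun i => (r i : ℂ))).mulVec (fun i => x (Sum.inr i))))
          = ∑ i : Fin N,
            ((starRingEnd ℂ) (x (Sum.inl i)) *
                ((r i : ℂ) * x (Sum.inl i) + c i * x (Sum.inr i)) +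
             (starRingEnd ℂ) (x (Sum.inr i)) *
                ((starRingEnd ℂ) (c i) * x (Sum.inl i) + (r i : ℂ) * x (Sum.inr i))) := by
        rw [dotProduct, Fintype.sum_sum_type, ← Finset.sum_add_distrib]
        refine Finset.sum_congr rfl fun i _ => ?_
        simp [Matrix.mulVec_diagonal, Pi.star_apply, mul_add]
      rw [hquad]
      exact Finset.sum_nonneg fun i _ => ls_quad_nonneg (r i) (c i) _ _ (hrc i)
  have heq : Matrix.fromBlocks
      (star U * Matrix.diagonal (fun i => (r i : ℂ)) * U)
      (star U * Matrix.diagonal c * star U)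
      (U * Matrix.diagonal (fun i => star (c i)) * U)
      (U * Matrix.diagonal (fun i => (r i : ℂ)) * star U) = W.conjTranspose * K * W := by
    rw [hW, hK, Matrix.fromBlocks_conjTranspose, Matrix.fromBlocks_multiply,
      Matrix.fromBlocks_multiply]
    simp [Matrix.star_eq_conjTranspose]
  rw [heq]
  exact hKps.conjTranspose_mul_mul_same W

/-- The key real inequality: `|cᵢ| ≤ rᵢ` under the dominance condition. -/
lemma ls_key_ineq (Mi ε va : ℝ) (hM : 0 ≤ Mi) (hε : 0 < ε) (hva : 0 ≤ va)
    (hdom : Mi ≤ va) :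
    Mi * va ^ 2 / (2 * (va ^ 2 + ε ^ 2) ^ ((3 : ℝ) / 2)) ≤
      1 - Mi / (2 * Real.sqrt (va ^ 2 + ε ^ 2)) * ((va ^ 2 + 2 * ε ^ 2) / (va ^ 2 + ε ^ 2)) := by
  have hd : (0 : ℝ) < va ^ 2 + ε ^ 2 := by positivity
  set s := Real.sqrt (va ^ 2 + ε ^ 2) with hs_def
  have hs : 0 < s := Real.sqrt_pos.mpr hd
  have hs2 : s ^ 2 = va ^ 2 + ε ^ 2 := Real.sq_sqrt hd.le
  have hT : (va ^ 2 + ε ^ 2) ^ ((3 : ℝ) / 2) = (va ^ 2 + ε ^ 2) * s := by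
    rw [show ((3 : ℝ) / 2) = 1 + 1 / 2 by norm_num, Real.rpow_add hd, Real.rpow_one,
      hs_def, Real.sqrt_eq_rpow]
  rw [hT]
  have hMs : Mi ≤ s := le_trans hdom (by
    rw [hs_def]
    calc va = Real.sqrt (va ^ 2) := (Real.sqrt_sq hva).symm
      _ ≤ Real.sqrt (va ^ 2 + ε ^ 2) := Real.sqrt_le_sqrt (by nlinarith))
  have hcomb : Mi * va ^ 2 / (2 * ((va ^ 2 + ε ^ 2) * s)) +
      Mi / (2 * s) * ((va ^ 2 + 2 * ε ^ 2) / (va ^ 2 + ε ^ 2)) = Mi / s := by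
    field_simp
    ring
  have hfin : Mi / s ≤ 1 := (div_le_one hs).mpr hMs
  linarith

/-- if `Mᵢ ≤ |vᵢ|` for every `i`, then the LS Hessian is
positive semidefinite. -/
theorem lsHessian_posSemidef {N : ℕ} (hN : 0 < N)
    (U : Matrix (Fin N) (Fin N) ℂ) (hU : star U * U = 1 ∧ U * star U = 1)
    (u : Fin N → ℂ) (M : Fin N → ℝ) (hM : ∀ i, 0 ≤ M i)
    (ε : ℝ) (hε : 0 < ε)
    (hdom : ∀ i, M i ≤ ‖U.mulVec u i‖) :
    (lsHessian U u M ε).PosSemidef := by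
  unfold lsHessian
  refine ls_blocks_posSemidef U _ _ fun i => ?_
  set v : Fin N → ℂ := U.mulVec u with hv
  have hdpos : (0 : ℝ) < 2 * ((‖v i‖) ^ 2 + ε ^ 2) ^ ((3 : ℝ) / 2) := by
    have : (0 : ℝ) < (‖v i‖) ^ 2 + ε ^ 2 := by positivity
    positivity
  have habs : ‖(M i : ℂ) * (v i) ^ 2 /
      ((2 * ((‖v i‖) ^ 2 + ε ^ 2) ^ ((3 : ℝ) / 2) : ℝ) : ℂ)‖
      = M i * (‖v i‖) ^ 2 /
        (2 * ((‖v i‖) ^ 2 + ε ^ 2) ^ ((3 : ℝ) / 2)) := by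
    rw [norm_div, norm_mul, norm_pow, Complex.norm_real, Complex.norm_real, Real.norm_eq_abs,
      Real.norm_eq_abs,
      abs_of_nonneg (hM i), abs_of_nonneg hdpos.le]
  rw [habs]
  exact ls_key_ineq (M i) ε (‖v i‖) (hM i) hε (norm_nonneg _) (hdom i)
end

section
/- Every eigenvalue λ of the MLP Hessian matrix H^{MLP} is real and satisfies |λ| ≤ 1 + (max_i I_i)/ε². -/
set_option maxHeartbeats 1000000 in
/-- every eigenvalue of the MLP Hessian is real and bounded in
absolute value by `1 + (maxᵢ Iᵢ)/ε²`. -/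
theorem mlpHessian_eigenvalue_bound {N : ℕ} (hN : 0 < N)
    (U : Matrix (Fin N) (Fin N) ℂ) (hU : star U * U = 1 ∧ U * star U = 1)
    (u : Fin N → ℂ) (I : Fin N → ℝ) (hI : ∀ i, 0 ≤ I i)
    (ε : ℝ) (hε : 0 < ε) (lam : ℂ)
    (hlam : ∃ x : Fin N ⊕ Fin N → ℂ, x ≠ 0 ∧ (mlpHessian U u I ε).mulVec x = lam • x) :
    lam.im = 0 ∧ |lam.re| ≤ 1 + (⨆ i : Fin N, I i) / ε ^ 2 := by
  classical
  obtain ⟨hU1, hU2⟩ := hU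
  obtain ⟨x, hx0, heq⟩ := hlam
  set v : Fin N → ℂ := U.mulVec u with hv
  set r : Fin N → ℝ := fun i => 1 - ε ^ 2 * I i / (‖v i‖ ^ 2 + ε ^ 2) ^ 2 with hrdef
  set c : Fin N → ℂ := fun i =>
    (I i : ℂ) * (v i) ^ 2 / (((‖v i‖ ^ 2 + ε ^ 2) ^ 2 : ℝ) : ℂ) with hcdef
  set Dr := Matrix.diagonal (fun i => (r i : ℂ)) with hDr
  set Dc := Matrix.diagonal c with hDc
  set Dc' := Matrix.diagonal (fun i => star (c i)) with hDc'
  have hH : mlpHessian U u I ε =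
      Matrix.fromBlocks (star U * Dr * U) (star U * Dc * star U)
        (U * Dc' * U) (U * Dr * star U) := rfl
  set x1 : Fin N → ℂ := x ∘ Sum.inl with hx1
  set x2 : Fin N → ℂ := x ∘ Sum.inr with hx2
  have hxel : x = Sum.elim x1 x2 := (Sum.elim_comp_inl_inr x).symm
  rw [hH, hxel, Matrix.fromBlocks_mulVec] at heq
  have h1 : (star U * Dr * U).mulVec x1 + (star U * Dc * star U).mulVec x2 = lam • x1 := by
    funext i
    have h := congrFun heq (Sum.inl i)
    simpa using h
  have h2 : (U * Dc' * U).mulVec x1 + (U * Dr * star U).mulVec x2 = lam • x2 := by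
    funext i
    have h := congrFun heq (Sum.inr i)
    simpa using h
  set y1 : Fin N → ℂ := U.mulVec x1 with hy1
  set y2 : Fin N → ℂ := (star U).mulVec x2 with hy2
  -- vector equations in terms of y1, y2
  have e1 : U * (star U * Dr * U) = Dr * U := by
    rw [show star U * Dr * U = star U * (Dr * U) from mul_assoc _ _ _, ← mul_assoc, hU2, one_mul]
  have e2 : U * (star U * Dc * star U) = Dc * star U := by
    rw [show star U * Dc * star U = star U * (Dc * star U) from mul_assoc _ _ _, ← mul_assoc,
      hU2, one_mul]
  have e3 : star U * (U * Dc' * U) = Dc' * U := by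
    rw [show U * Dc' * U = U * (Dc' * U) from mul_assoc _ _ _, ← mul_assoc, hU1, one_mul]
  have e4 : star U * (U * Dr * star U) = Dr * star U := by
    rw [show U * Dr * star U = U * (Dr * star U) from mul_assoc _ _ _, ← mul_assoc, hU1, one_mul]
  have g1 : Dr.mulVec y1 + Dc.mulVec y2 = lam • y1 := by
    have h := congrArg (fun w => U.mulVec w) h1
    simp only [Matrix.mulVec_add, Matrix.mulVec_mulVec, Matrix.mulVec_smul, e1, e2] at h
    simpa [← Matrix.mulVec_mulVec] using h
  have g2 : Dc'.mulVec y1 + Dr.mulVec y2 = lam • y2 := by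
    have h := congrArg (fun w => (star U).mulVec w) h2
    simp only [Matrix.mulVec_add, Matrix.mulVec_mulVec, Matrix.mulVec_smul, e3, e4] at h
    simpa [← Matrix.mulVec_mulVec] using h
  have hA : ∀ i, (r i : ℂ) * y1 i + c i * y2 i = lam * y1 i := by
    intro i
    have h := congrFun g1 i
    simpa [Dr, Dc, Matrix.mulVec_diagonal] using h
  have hB : ∀ i, (starRingEnd ℂ) (c i) * y1 i + (r i : ℂ) * y2 i = lam * y2 i := by
    intro i
    have h := congrFun g2 i
    simpa [Dr, Dc', Matrix.mulVec_diagonal, Complex.star_def] using h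
  -- there is an index where (y1 i, y2 i) ≠ (0,0)
  have hinj : ∀ w : Fin N → ℂ, U.mulVec w = 0 → w = 0 := by
    intro w hw
    have := congrArg (fun z => (star U).mulVec z) hw
    simpa [Matrix.mulVec_mulVec, hU1, Matrix.one_mulVec] using this
  have hinj' : ∀ w : Fin N → ℂ, (star U).mulVec w = 0 → w = 0 := by
    intro w hw
    have := congrArg (fun z => U.mulVec z) hw
    simpa [Matrix.mulVec_mulVec, hU2, Matrix.one_mulVec] using this
  have hex : ∃ i, y1 i ≠ 0 ∨ y2 i ≠ 0 := by
    by_contra hcon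
    push_neg at hcon
    have hy10 : y1 = 0 := funext fun i => (hcon i).1
    have hy20 : y2 = 0 := funext fun i => (hcon i).2
    have hx10 : x1 = 0 := by
      rw [hy1] at hy10
      simpa [Matrix.mulVec_mulVec, hU1, Matrix.one_mulVec] using
        congrArg (fun z => (star U).mulVec z) hy10
    have hx20 : x2 = 0 := by
      rw [hy2] at hy20
      simpa [Matrix.mulVec_mulVec, hU2, Matrix.one_mulVec] using
        congrArg (fun z => U.mulVec z) hy20
    apply hx0
    rw [hxel, hx10, hx20]
    funext j
    cases j <;> simp
  obtain ⟨i, hi⟩ := hex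
  obtain ⟨R, hR⟩ : ∃ R : ℝ, R = r i := ⟨_, rfl⟩
  obtain ⟨C, hC⟩ : ∃ C : ℂ, C = c i := ⟨_, rfl⟩
  obtain ⟨a, ha⟩ : ∃ a : ℂ, a = y1 i := ⟨_, rfl⟩
  obtain ⟨b, hb⟩ : ∃ b : ℂ, b = y2 i := ⟨_, rfl⟩
  rw [← ha, ← hb] at hi
  have eqA : (R : ℂ) * a + C * b = lam * a := by
    rw [hR, hC, ha, hb]; exact hA i
  have eqB : (starRingEnd ℂ) C * a + (R : ℂ) * b = lam * b := by
    rw [hC, hR, ha, hb]; exact hB i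
  set S : ℝ := ‖a‖ ^ 2 + ‖b‖ ^ 2 with hS
  set T : ℂ := C * (starRingEnd ℂ) a * b with hT
  have hconja : (starRingEnd ℂ) a * a = ((‖a‖ ^ 2 : ℝ) : ℂ) := by
    rw [mul_comm, Complex.mul_conj, Complex.normSq_eq_norm_sq]
  have hconjb : (starRingEnd ℂ) b * b = ((‖b‖ ^ 2 : ℝ) : ℂ) := by
    rw [mul_comm, Complex.mul_conj, Complex.normSq_eq_norm_sq]
  have keyraw : lam * ((starRingEnd ℂ) a * a + (starRingEnd ℂ) b * b)
      = (R : ℂ) * ((starRingEnd ℂ) a * a + (starRingEnd ℂ) b * b)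
        + (T + (starRingEnd ℂ) T) := by
    have hTconj : (starRingEnd ℂ) T = (starRingEnd ℂ) C * a * (starRingEnd ℂ) b := by
      simp [hT, map_mul, mul_comm, mul_left_comm]
    rw [hTconj, hT]
    linear_combination (-((starRingEnd ℂ) a)) * eqA - (starRingEnd ℂ) b * eqB
  have key : lam * (S : ℂ) = (R : ℂ) * (S : ℂ) + (T + (starRingEnd ℂ) T) := by
    rw [hS, Complex.ofReal_add, ← hconja, ← hconjb]
    exact keyraw
  have hSpos : 0 < S := by
    rcases hi with h | h
    · have h1 := norm_pos_iff.mpr h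
      have h2 := norm_nonneg b
      nlinarith
    · have h1 := norm_pos_iff.mpr h
      have h2 := norm_nonneg a
      nlinarith
  have him : lam.im = 0 := by
    have h := congrArg Complex.im key
    simp only [Complex.mul_im, Complex.add_im, Complex.conj_im, Complex.ofReal_im,
      Complex.ofReal_re, mul_zero, zero_mul, add_zero, zero_add] at h
    have : lam.im * S = 0 := by linarith
    rcases mul_eq_zero.mp this with h' | h'
    · exact h'
    · exact absurd h' hSpos.ne'
  refine ⟨him, ?_⟩
  have hre : lam.re * S = R * S + 2 * T.re := by
    have h := congrArg Complex.re key
    simp only [Complex.mul_re, Complex.add_re, Complex.conj_re, Complex.ofReal_im,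
      Complex.ofReal_re, mul_zero, zero_mul, add_zero, sub_zero, him] at h
    linarith
  -- bound |lam.re| ≤ |R| + |C|
  have habsT : ‖T‖ = ‖C‖ * ‖a‖ * ‖b‖ := by
    simp [hT, map_mul]
  have hTre : |T.re| ≤ ‖C‖ * ‖a‖ * ‖b‖ :=
    habsT ▸ Complex.abs_re_le_norm T
  have h2ab : 2 * (‖a‖ * ‖b‖) ≤ S := by
    nlinarith [sq_nonneg (‖a‖ - ‖b‖)]
  have hstep : |lam.re| * S ≤ (|R| + ‖C‖) * S := by
    have h1' : |lam.re| * S = |R * S + 2 * T.re| := by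
      rw [← hre, abs_mul, abs_of_pos hSpos]
    have h2' : |R * S + 2 * T.re| ≤ |R| * S + 2 * |T.re| := by
      calc |R * S + 2 * T.re| ≤ |R * S| + |2 * T.re| := abs_add_le _ _
        _ = |R| * S + 2 * |T.re| := by
            rw [abs_mul, abs_of_pos hSpos, abs_mul]; norm_num
    have h3' : 2 * |T.re| ≤ ‖C‖ * S := by
      nlinarith [mul_le_mul_of_nonneg_left h2ab (norm_nonneg C), hTre,
        norm_nonneg C]
    linarith
  have hmain : |lam.re| ≤ |R| + ‖C‖ :=
    le_of_mul_le_mul_right hstep hSpos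
  -- numeric bound on |R| + |C|
  set d : ℝ := ‖v i‖ ^ 2 + ε ^ 2 with hd
  have hd0 : 0 < d := by positivity
  have hdε : ε ^ 2 ≤ d := by nlinarith [sq_nonneg ‖v i‖]
  have hRval : R = 1 - ε ^ 2 * I i / d ^ 2 := by rw [hR, hrdef]
  have hCabs : ‖C‖ = I i * ‖v i‖ ^ 2 / d ^ 2 := by
    rw [hC, hcdef]
    simp only [norm_div, norm_mul, norm_pow, Complex.norm_real, Real.norm_eq_abs]
    rw [abs_of_nonneg (by positivity : (0:ℝ) ≤ ‖v i‖ ^ 2 + ε ^ 2),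
      abs_of_nonneg (hI i), hd]
  have hA0 : 0 ≤ ε ^ 2 * I i / d ^ 2 :=
    div_nonneg (mul_nonneg (sq_nonneg ε) (hI i)) (sq_nonneg d)
  have habsR : |R| ≤ 1 + ε ^ 2 * I i / d ^ 2 := by
    rw [hRval]
    calc |1 - ε ^ 2 * I i / d ^ 2| ≤ |1| + |ε ^ 2 * I i / d ^ 2| := abs_sub _ _
      _ = 1 + ε ^ 2 * I i / d ^ 2 := by rw [abs_one, abs_of_nonneg hA0]
  have hsum : ε ^ 2 * I i / d ^ 2 + I i * ‖v i‖ ^ 2 / d ^ 2 = I i / d := by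
    field_simp
    ring
  have hID : I i / d ≤ I i / ε ^ 2 := by
    rw [div_le_div_iff₀ hd0 (by positivity)]
    nlinarith [hI i]
  have hsup : I i ≤ ⨆ j, I j := le_ciSup (Set.Finite.bddAbove (Set.finite_range I)) i
  have hsupdiv : I i / ε ^ 2 ≤ (⨆ j, I j) / ε ^ 2 := by gcongr
  rw [hCabs] at hmain
  linarith
end

section
/- Every eigenvalue λ of the LS Hessian matrix H^{LS} is real and satisfies |λ| ≤ 1 + (max_i M_i)/ε. -/
lemma key_ineq (M s ε : ℝ) (hM : 0 ≤ M) (hs : 0 ≤ s) (hε : 0 < ε) :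
    |1 - M / (2 * Real.sqrt (s + ε ^ 2)) * ((s + 2 * ε ^ 2) / (s + ε ^ 2))|
      + M * s / (2 * (s + ε ^ 2) ^ ((3 : ℝ) / 2)) ≤ 1 + M / ε := by
  set q := Real.sqrt (s + ε ^ 2) with hqdef
  have hden : (0:ℝ) < s + ε ^ 2 := by positivity
  have hq0 : 0 < q := Real.sqrt_pos.2 hden
  have hq2 : q ^ 2 = s + ε ^ 2 := Real.sq_sqrt hden.le
  have hqε : ε ≤ q := by
    rw [hqdef]
    nlinarith [Real.sq_sqrt hden.le, Real.sqrt_nonneg (s + ε ^ 2)]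
  have h32 : (s + ε ^ 2) ^ ((3 : ℝ) / 2) = q ^ 3 := by
    rw [← hq2, ← Real.rpow_natCast q 2, ← Real.rpow_mul hq0.le, ← Real.rpow_natCast q 3]
    norm_num
  rw [h32]
  rcases abs_cases (1 - M / (2 * q) * ((s + 2 * ε ^ 2) / (s + ε ^ 2))) with ⟨h, _⟩ | ⟨h, _⟩ <;> rw [h]
  · have hC : M * s / (2 * q ^ 3) ≤ M / (2 * q) * ((s + 2 * ε ^ 2) / (s + ε ^ 2)) := by
      rw [← hq2]
      rw [div_mul_div_comm]
      apply div_le_div₀ (by positivity) (by nlinarith) (by positivity)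
      ring_nf
      nlinarith [hq0]
    have : 0 ≤ M / ε := by positivity
    linarith
  · have hsum : M / (2 * q) * ((s + 2 * ε ^ 2) / (s + ε ^ 2)) + M * s / (2 * q ^ 3) = M / q := by
      rw [← hq2]
      field_simp
      linear_combination (-2 * M) * hq2
    have : M / q ≤ M / ε := div_le_div_of_nonneg_left hM hε hqε |>.trans_eq rfl
    linarith



/-- every eigenvalue of the LS Hessian is real and bounded in
absolute value by `1 + (maxᵢ Mᵢ)/ε`. -/
theorem lsHessian_eigenvalue_bound {N : ℕ} (hN : 0 < N)
    (U : Matrix (Fin N) (Fin N) ℂ) (hU : star U * U = 1 ∧ U * star U = 1)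
    (u : Fin N → ℂ) (M : Fin N → ℝ) (hM : ∀ i, 0 ≤ M i)
    (ε : ℝ) (hε : 0 < ε) (lam : ℂ)
    (hlam : ∃ x : Fin N ⊕ Fin N → ℂ, x ≠ 0 ∧ (lsHessian U u M ε).mulVec x = lam • x) :
    lam.im = 0 ∧ |lam.re| ≤ 1 + (⨆ i : Fin N, M i) / ε := by
  obtain ⟨hU1, hU2⟩ := hU
  obtain ⟨x, hx0, hHx⟩ := hlam
  set v : Fin N → ℂ := U.mulVec u with hv
  set r : Fin N → ℝ := fun i =>
    1 - (M i / (2 * Real.sqrt ((‖v i‖) ^ 2 + ε ^ 2))) *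
      (((‖v i‖) ^ 2 + 2 * ε ^ 2) / ((‖v i‖) ^ 2 + ε ^ 2)) with hrdef
  set c : Fin N → ℂ := fun i =>
    (M i : ℂ) * (v i) ^ 2 /
      ((2 * ((‖v i‖) ^ 2 + ε ^ 2) ^ ((3 : ℝ) / 2) : ℝ) : ℂ) with hcdef
  have hH : lsHessian U u M ε = Matrix.fromBlocks
      (star U * Matrix.diagonal (fun i => (r i : ℂ)) * U)
      (star U * Matrix.diagonal c * star U)
      (U * Matrix.diagonal (fun i => star (c i)) * U)
      (U * Matrix.diagonal (fun i => (r i : ℂ)) * star U) := rfl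
  clear_value v r c
  rw [hH, Matrix.fromBlocks_mulVec] at hHx
  set x1 : Fin N → ℂ := x ∘ Sum.inl with hx1def
  set x2 : Fin N → ℂ := x ∘ Sum.inr with hx2def
  set y1 : Fin N → ℂ := U.mulVec x1 with hy1
  set y2 : Fin N → ℂ := (star U).mulVec x2 with hy2
  -- first block row
  have e1 : (star U * Matrix.diagonal (fun i => (r i : ℂ)) * U).mulVec x1
      + (star U * Matrix.diagonal c * star U).mulVec x2 = lam • x1 := by
    funext j
    have := congrFun hHx (Sum.inl j)
    simpa [hx1def] using this
  have e2 : (U * Matrix.diagonal (fun i => star (c i)) * U).mulVec x1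
      + (U * Matrix.diagonal (fun i => (r i : ℂ)) * star U).mulVec x2 = lam • x2 := by
    funext j
    have := congrFun hHx (Sum.inr j)
    simpa [hx2def] using this
  have f1 : (Matrix.diagonal (fun i => (r i : ℂ))).mulVec y1
      + (Matrix.diagonal c).mulVec y2 = lam • y1 := by
    have := congrArg U.mulVec e1
    rw [Matrix.mulVec_add, Matrix.mulVec_mulVec, Matrix.mulVec_mulVec, Matrix.mulVec_smul] at this
    rw [show U * (star U * Matrix.diagonal (fun i => (r i : ℂ)) * U)
        = Matrix.diagonal (fun i => (r i : ℂ)) * U by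
      rw [← mul_assoc, ← mul_assoc, hU2, one_mul]] at this
    rw [show U * (star U * Matrix.diagonal c * star U) = Matrix.diagonal c * star U by
      rw [← mul_assoc, ← mul_assoc, hU2, one_mul]] at this
    rw [← Matrix.mulVec_mulVec, ← Matrix.mulVec_mulVec] at this
    exact this
  have f2 : (Matrix.diagonal (fun i => star (c i))).mulVec y1
      + (Matrix.diagonal (fun i => (r i : ℂ))).mulVec y2 = lam • y2 := by
    have := congrArg (star U).mulVec e2
    rw [Matrix.mulVec_add, Matrix.mulVec_mulVec, Matrix.mulVec_mulVec, Matrix.mulVec_smul] at this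
    rw [show star U * (U * Matrix.diagonal (fun i => star (c i)) * U)
        = Matrix.diagonal (fun i => star (c i)) * U by
      rw [← mul_assoc, ← mul_assoc, hU1, one_mul]] at this
    rw [show star U * (U * Matrix.diagonal (fun i => (r i : ℂ)) * star U)
        = Matrix.diagonal (fun i => (r i : ℂ)) * star U by
      rw [← mul_assoc, ← mul_assoc, hU1, one_mul]] at this
    rw [← Matrix.mulVec_mulVec, ← Matrix.mulVec_mulVec] at this
    exact this
  -- nonvanishing
  have hex : ∃ i, y1 i ≠ 0 ∨ y2 i ≠ 0 := by
    by_contra h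
    push_neg at h
    have hy1z : y1 = 0 := funext fun i => (h i).1
    have hy2z : y2 = 0 := funext fun i => (h i).2
    have hx1z : x1 = 0 := by
      have : (star U).mulVec y1 = x1 := by
        rw [hy1, Matrix.mulVec_mulVec, hU1, Matrix.one_mulVec]
      rw [hy1z, Matrix.mulVec_zero] at this
      exact this.symm
    have hx2z : x2 = 0 := by
      have : U.mulVec y2 = x2 := by
        rw [hy2, Matrix.mulVec_mulVec, hU2, Matrix.one_mulVec]
      rw [hy2z, Matrix.mulVec_zero] at this
      exact this.symm
    apply hx0
    funext j
    cases j with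
    | inl j => exact congrFun hx1z j
    | inr j => exact congrFun hx2z j
  obtain ⟨i, hi⟩ := hex
  clear_value x1 x2 y1 y2
  set a : ℂ := y1 i with ha
  set b : ℂ := y2 i with hb
  have eq1 : (r i : ℂ) * a + c i * b = lam * a := by
    have := congrFun f1 i
    simpa [Matrix.mulVec_diagonal] using this
  have eq2 : (starRingEnd ℂ) (c i) * a + (r i : ℂ) * b = lam * b := by
    have := congrFun f2 i
    simpa [Matrix.mulVec_diagonal] using this
  set n : ℝ := Complex.normSq a + Complex.normSq b with hn
  have hnpos : 0 < n := by
    rcases hi with hi | hi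
    · have := Complex.normSq_pos.2 hi
      have := Complex.normSq_nonneg b
      rw [hn]; linarith
    · have := Complex.normSq_pos.2 hi
      have := Complex.normSq_nonneg a
      rw [hn]; linarith
  set z : ℂ := c i * (starRingEnd ℂ) a * b with hz
  clear_value a b n z
  have key : lam * (n : ℂ) = ((r i : ℝ) : ℂ) * (n : ℂ) + (z + (starRingEnd ℂ) z) := by
    have hnc : (n : ℂ) = a * (starRingEnd ℂ) a + b * (starRingEnd ℂ) b := by
      rw [hn]
      push_cast [← Complex.mul_conj]
      ring
    rw [hnc, hz]
    simp only [map_mul, Complex.conj_conj]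
    linear_combination (-(starRingEnd ℂ) a) * eq1 - (starRingEnd ℂ) b * eq2
  have key2 : lam * (n : ℂ) = ((r i * n + 2 * z.re : ℝ) : ℂ) := by
    rw [key, Complex.add_conj]
    push_cast
    ring
  have him : lam.im = 0 := by
    have h := congrArg Complex.im key2
    simp [Complex.mul_im, Complex.ofReal_im] at h
    rcases h with h | h
    · exact h
    · exact absurd h hnpos.ne'
  refine ⟨him, ?_⟩
  have hre : lam.re * n = r i * n + 2 * z.re := by
    have h := congrArg Complex.re key2
    simpa [Complex.mul_re, Complex.ofReal_re] using h
  -- bound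
  have habs : |lam.re| * n ≤ (|r i| + ‖c i‖) * n := by
    have h1 : |lam.re * n| = |lam.re| * n := by
      rw [abs_mul, abs_of_pos hnpos]
    have h2 : |r i * n + 2 * z.re| ≤ |r i| * n + 2 * ‖z‖ := by
      calc |r i * n + 2 * z.re| ≤ |r i * n| + |2 * z.re| := abs_add_le _ _
        _ ≤ |r i| * n + 2 * ‖z‖ := by
            rw [abs_mul, abs_of_pos hnpos, abs_mul, abs_two]
            have := Complex.abs_re_le_norm z
            linarith
    have h3 : 2 * ‖z‖ ≤ ‖c i‖ * n := by
      rw [hz, norm_mul, norm_mul, Complex.norm_conj]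
      have hab : 2 * (‖a‖ * ‖b‖) ≤ n := by
        rw [hn, Complex.normSq_eq_norm_sq, Complex.normSq_eq_norm_sq]
        nlinarith [sq_nonneg (‖a‖ - ‖b‖)]
      have := norm_nonneg (c i)
      nlinarith
    calc |lam.re| * n = |lam.re * n| := h1.symm
      _ = |r i * n + 2 * z.re| := by rw [hre]
      _ ≤ |r i| * n + 2 * ‖z‖ := h2
      _ ≤ |r i| * n + ‖c i‖ * n := by linarith
      _ = (|r i| + ‖c i‖) * n := by ring
  have hbound : |lam.re| ≤ |r i| + ‖c i‖ :=
    le_of_mul_le_mul_right (by linarith [habs]) hnpos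
  have hcabs : ‖c i‖
      = M i * (‖v i‖) ^ 2 / (2 * ((‖v i‖) ^ 2 + ε ^ 2) ^ ((3 : ℝ) / 2)) := by
    rw [hcdef]
    have hT : (0:ℝ) < 2 * ((‖v i‖) ^ 2 + ε ^ 2) ^ ((3 : ℝ) / 2) := by positivity
    simp only [norm_div, norm_mul, Complex.norm_real, norm_pow, Real.norm_eq_abs]
    rw [abs_of_nonneg (hM i), abs_two, abs_of_pos (by positivity : (0:ℝ) < ((‖v i‖) ^ 2 + ε ^ 2) ^ ((3 : ℝ) / 2))]
  have hfin : |r i| + ‖c i‖ ≤ 1 + M i / ε := by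
    rw [hcabs, hrdef]
    simpa using key_ineq (M i) ((‖v i‖) ^ 2) ε (hM i) (by positivity) hε
  have hsup : M i ≤ ⨆ j : Fin N, M j :=
    le_ciSup (Set.Finite.bddAbove (Set.finite_range M)) i
  have : 1 + M i / ε ≤ 1 + (⨆ j : Fin N, M j) / ε := by
    gcongr
  linarith [hbound, hfin]
end
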